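/- Let φ ≥ 26 and 0 < ε ≤ 1/φ, consider the complete bipartite graph K_{2,2} with edge weights w_{11}, w_{12}, w_{21}, w_{22}, and suppose the event E^φ_ε occurs. Then for every integer k with 0 ≤ k ≤ 1/(52ε) − 1, the belief of node u_1 at the end of iteration 4k of the belief propagation algorithm of Bayati et al. is incorrect: b^{4k}_{u_1}(1) > b^{4k}_{u_1}(2), so the estimated matching at iteration 4k matches u_1 to v_1, whereas the unique maximum-weight matching of K_{2,2} is M_2 = {(u_1,v_2),(u_2,v_1)}. -/

import Mathlib

open MeasureTheory

/-- The messages of the belief propagation algorithm of Bayati et al. on the complete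
bipartite graph `K_{n,n}` with weights `w`. `(BPmsg n w t).1 i j r` is the message
`m⃗ᵗ_{ij}(r)` from `u_i` to `v_j` and `(BPmsg n w t).2 j i r` is the message
`m⃖ᵗ_{ji}(r)` from `v_j` to `u_i` at iteration `t`. (For `n ≤ 1` the maxima over the
empty index set take the junk value `0` of real suprema.) -/
noncomputable def BPmsg (n : ℕ) (w : Fin n → Fin n → ℝ) :
    ℕ → (Fin n → Fin n → Fin n → ℝ) × (Fin n → Fin n → Fin n → ℝ)
  | 0 =>
    (fun i j r => if r = i then w i j else 0,
     fun j i r => if r = j then w i j else 0)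
  | t + 1 =>
    (fun i j r =>
      if r = i then w i j + ∑ k ∈ Finset.univ.filter (· ≠ j), (BPmsg n w t).2 k i j
      else ⨆ q : {q : Fin n // q ≠ j},
        (w i q + ∑ k ∈ Finset.univ.filter (· ≠ j), (BPmsg n w t).2 k i (q : Fin n)),
     fun j i r =>
      if r = j then w i j + ∑ k ∈ Finset.univ.filter (· ≠ i), (BPmsg n w t).1 k j i
      else ⨆ q : {q : Fin n // q ≠ i},
        (w q j + ∑ k ∈ Finset.univ.filter (· ≠ i), (BPmsg n w t).1 k j (q : Fin n)))

/-- The belief `bᵗ_{u_i}(r)` of node `u_i` at iteration `t`. -/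
noncomputable def belief (n : ℕ) (w : Fin n → Fin n → ℝ) (t : ℕ) (i r : Fin n) : ℝ :=
  w i r + ∑ k, (BPmsg n w t).2 k i r

/-- A matching of `K_{n,n}`, given as a set of edges `(i, j)` (meaning `(u_i, v_j)`)
that are pairwise non-adjacent. -/
def IsMatching (n : ℕ) (M : Finset (Fin n × Fin n)) : Prop :=
  ∀ p ∈ M, ∀ q ∈ M, p ≠ q → p.1 ≠ q.1 ∧ p.2 ≠ q.2

/-- The weight of a matching of `K_{n,n}`. -/
noncomputable def matchingWeight (n : ℕ) (w : Fin n → Fin n → ℝ)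
    (M : Finset (Fin n × Fin n)) : ℝ :=
  ∑ p ∈ M, w p.1 p.2

/-- Belief propagation has converged by iteration `t`: there is a unique maximum-weight
matching `M`, and at every iteration `s ≥ t` the estimated matching (matching each `u_i`
to the unique maximizer of its belief) equals `M`. -/
def BPConvergedBy (n : ℕ) (w : Fin n → Fin n → ℝ) (t : ℕ) : Prop :=
  ∃ M : Finset (Fin n × Fin n), IsMatching n M ∧
    (∀ M', IsMatching n M' → M' ≠ M → matchingWeight n w M' < matchingWeight n w M) ∧
    ∀ s, t ≤ s → ∀ i : Fin n, ∃ j : Fin n, (i, j) ∈ M ∧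
      ∀ r : Fin n, r ≠ j → belief n w s i r < belief n w s i j


/-!
On `K_{2,2}` every sum over `k ≠ j` and every maximum over `q ≠ j` has the single term
`j.rev`, so a round of belief propagation copies each message from one earlier message and adds
one edge weight. These copies cycle with period four, and four rounds add to every message
twice the weight `w i r + w i.rev r.rev` of the perfect matching through its edge. Hence
`b^{4k}_{u_1}(1) - b^{4k}_{u_1}(2)` is `2 (w₁₁ - w₁₂) ≥ 1/13` minus `4k` times the gap
`w₁₂ + w₂₁ - w₁₁ - w₂₂ ≤ ε` between the two perfect matchings, which is positive while
`52 k ε < 1`.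
-/

lemma Fin.ne_iff_eq_rev_of_two {j q : Fin 2} : q ≠ j ↔ q = j.rev := by
  rw [Ne, Fin.ext_iff, Fin.ext_iff, Fin.val_rev]
  omega

lemma Fin.sum_filter_ne_two {M : Type*} [AddCommMonoid M] (f : Fin 2 → M) (j : Fin 2) :
    ∑ k ∈ Finset.univ.filter (· ≠ j), f k = f j.rev := by
  refine Finset.sum_eq_single_of_mem j.rev ?_ fun q hq hne =>
    absurd (Fin.ne_iff_eq_rev_of_two.1 (Finset.mem_filter.1 hq).2) hne
  simpa using Fin.ne_iff_eq_rev_of_two.2 rfl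

lemma Fin.iSup_ne_two {α : Type*} [ConditionallyCompleteLattice α] (f : Fin 2 → α)
    (j : Fin 2) : ⨆ q : {q : Fin 2 // q ≠ j}, f q = f j.rev := by
  let : Unique {q : Fin 2 // q ≠ j} :=
    { default := ⟨j.rev, Fin.ne_iff_eq_rev_of_two.2 rfl⟩
      uniq := fun q => Subtype.ext (Fin.ne_iff_eq_rev_of_two.1 q.2) }
  exact ciSup_unique (s := fun q : {q : Fin 2 // q ≠ j} => f q)

namespace BPmsg

variable (w : Fin 2 → Fin 2 → ℝ)

lemma two_succ_fst (t : ℕ) (i j r : Fin 2) :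
    (BPmsg 2 w (t + 1)).1 i j r = if r = i then w i j + (BPmsg 2 w t).2 j.rev i j
      else w i j.rev + (BPmsg 2 w t).2 j.rev i j.rev := by
  simp only [BPmsg, Fin.sum_filter_ne_two]
  rw [Fin.iSup_ne_two (fun q => w i q + (BPmsg 2 w t).2 j.rev i q)]

lemma two_succ_snd (t : ℕ) (i j r : Fin 2) :
    (BPmsg 2 w (t + 1)).2 j i r = if r = j then w i j + (BPmsg 2 w t).1 i.rev j i
      else w i.rev j + (BPmsg 2 w t).1 i.rev j i.rev := by
  simp only [BPmsg, Fin.sum_filter_ne_two]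
  rw [Fin.iSup_ne_two (fun q => w q j + (BPmsg 2 w t).1 i.rev j q)]

lemma two_snd_add_four (t : ℕ) (i j r : Fin 2) :
    (BPmsg 2 w (t + 4)).2 j i r = (BPmsg 2 w t).2 j i r + 2 * (w i r + w i.rev r.rev) := by
  fin_cases i <;> fin_cases j <;> fin_cases r <;>
    simp only [Fin.mk_one, Fin.isValue, Fin.zero_eta, two_succ_snd, two_succ_fst, zero_ne_one,
      one_ne_zero, ↓reduceIte, Fin.reduceRev, Fin.rev_zero, Fin.reduceLast] <;> ring

lemma two_snd_four_mul (k : ℕ) (i j r : Fin 2) :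
    (BPmsg 2 w (4 * k)).2 j i r =
      2 * k * (w i r + w i.rev r.rev) + if r = j then w i j else 0 := by
  induction k with
  | zero => simp [BPmsg]
  | succ k ih => rw [Nat.mul_succ, two_snd_add_four, ih]; push_cast; ring

end BPmsg

lemma belief_two_four_mul (w : Fin 2 → Fin 2 → ℝ) (k : ℕ) (i r : Fin 2) :
    belief 2 w (4 * k) i r = 2 * w i r + 4 * k * (w i r + w i.rev r.rev) := by
  rw [belief, Fin.sum_univ_two, BPmsg.two_snd_four_mul, BPmsg.two_snd_four_mul]
  fin_cases r <;> simp <;> ring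

lemma IsMatching.subset_diag_or_subset_antidiag {M : Finset (Fin 2 × Fin 2)}
    (hM : IsMatching 2 M) : M ⊆ {(0, 0), (1, 1)} ∨ M ⊆ {(0, 1), (1, 0)} := by
  revert M
  unfold IsMatching
  decide

lemma isMatching_antidiag : IsMatching 2 {(0, 1), (1, 0)} := by
  unfold IsMatching
  decide

lemma matchingWeight_lt_antidiag {w : Fin 2 → Fin 2 → ℝ} (hw : ∀ i j, 0 < w i j)
    (hdiag : w 0 0 + w 1 1 < w 0 1 + w 1 0) {M : Finset (Fin 2 × Fin 2)}
    (hM : IsMatching 2 M) (hne : M ≠ {(0, 1), (1, 0)}) :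
    matchingWeight 2 w M < matchingWeight 2 w {(0, 1), (1, 0)} := by
  rcases hM.subset_diag_or_subset_antidiag with hsub | hsub
  · calc matchingWeight 2 w M ≤ matchingWeight 2 w {(0, 0), (1, 1)} :=
          Finset.sum_le_sum_of_subset_of_nonneg hsub fun p _ _ => (hw _ _).le
      _ < matchingWeight 2 w {(0, 1), (1, 0)} := by
          simpa [matchingWeight, Finset.sum_pair] using hdiag
  · obtain ⟨p, hp, hpM⟩ := Finset.exists_of_ssubset (ssubset_of_subset_of_ne hsub hne)
    exact Finset.sum_lt_sum_of_subset hsub hp hpM (hw _ _) fun q _ _ => (hw _ _).le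

/-- If the event `E^φ_ε` occurs for `K_{2,2}` (with `w i j` the weight of the edge
`(u_{i+1}, v_{j+1})`), where `φ ≥ 26` and `0 < ε ≤ 1/φ`, then for every integer
`k ≤ 1/(52ε) - 1` the belief of node `u_1` at the end of iteration `4k` is incorrect:
`b^{4k}_{u_1}(1) > b^{4k}_{u_1}(2)`, so the estimated matching matches `u_1` to
`v_1`, whereas the unique maximum-weight matching is `M₂ = {(u_1,v_2), (u_2,v_1)}`. -/
theorem bp_K22_false_belief_smoothed
    (φ ε : ℝ) (hφ : 26 ≤ φ) (hε₀ : 0 < ε) (hε₁ : ε ≤ 1 / φ)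
    (w : Fin 2 → Fin 2 → ℝ)
    (h11 : w 0 0 ∈ Set.Icc (1 - 1 / φ) 1)
    (h12 : w 0 1 ∈ Set.Ioc (23 / 26 : ℝ) (23 / 26 + 1 / φ))
    (h21 : w 1 0 ∈ Set.Ioc (23 / 26 : ℝ) (23 / 26 + 1 / φ))
    (h22 : w 1 1 ∈ Set.Ico (w 0 1 + w 1 0 - w 0 0 - ε) (w 0 1 + w 1 0 - w 0 0)) :
    ∀ k : ℕ, (k : ℝ) ≤ 1 / (52 * ε) - 1 →
      belief 2 w (4 * k) 0 1 < belief 2 w (4 * k) 0 0 ∧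
      IsMatching 2 {((0 : Fin 2), (1 : Fin 2)), ((1 : Fin 2), (0 : Fin 2))} ∧
      (∀ M : Finset (Fin 2 × Fin 2), IsMatching 2 M →
        M ≠ {((0 : Fin 2), (1 : Fin 2)), ((1 : Fin 2), (0 : Fin 2))} →
        matchingWeight 2 w M <
          matchingWeight 2 w {((0 : Fin 2), (1 : Fin 2)), ((1 : Fin 2), (0 : Fin 2))}) := by
  intro k hk
  obtain ⟨h11l, h11r⟩ := h11
  obtain ⟨h12l, h12r⟩ := h12
  obtain ⟨h21l, h21r⟩ := h21
  obtain ⟨h22l, h22r⟩ := h22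
  have hφ_inv : 1 / φ ≤ 1 / 26 := one_div_le_one_div_of_le (by norm_num) hφ
  have hw : ∀ i j, 0 < w i j := by
    simp only [Fin.forall_fin_two]
    refine ⟨⟨?_, ?_⟩, ?_, ?_⟩ <;> linarith
  refine ⟨?_, isMatching_antidiag, fun M hM hne =>
    matchingWeight_lt_antidiag hw (by linarith) hM hne⟩
  have hkε : 52 * ε * k ≤ 1 - 52 * ε := by
    calc 52 * ε * k ≤ 52 * ε * (1 / (52 * ε) - 1) := by gcongr
      _ = 1 - 52 * ε := by field_simp
  have hdrift : -(k * ε) ≤ k * (w 0 0 + w 1 1 - w 0 1 - w 1 0) := by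
    rw [← mul_neg]; gcongr; linarith
  have hb₀₀ : belief 2 w (4 * k) 0 0 = 2 * w 0 0 + 4 * k * (w 0 0 + w 1 1) :=
    belief_two_four_mul w k 0 0
  have hb₀₁ : belief 2 w (4 * k) 0 1 = 2 * w 0 1 + 4 * k * (w 0 1 + w 1 0) :=
    belief_two_four_mul w k 0 1
  linarith
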